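/- For every n ≥ 1, consider the ranked alphabet Σₙ = { Aⱼ of arity 1, Bⱼ of arity 1, Fⱼ of arity 0 : 1 ≤ j ≤ n } and the set of trees Dₙ = { F_z : z ∈ [1,n] } ∪ { B_y(F_z) : y,z ∈ [1,n] } ∪ { A_x(B_y(F_z)) : x,y,z ∈ [1,n] }, which is recognized by a top-down tree automaton of size linear in n with all states initial. Then every tree test set of Dₙ has at least n³ elements; in fact, for any x, y, z ∈ [1,n] there exist two 1STSs τ₁, τ₂ over Σₙ with output alphabet {p, q} such that ⟦τ₁⟧ and ⟦τ₂⟧ agree on every tree of Dₙ except the tree A_x(B_y(F_z)), on which they differ. -/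
import Mathlib


/-- Trees labelled by symbols from `F`, with a finite list of children at each node. -/
inductive RTree (F : Type) : Type
  | node (f : F) (children : List (RTree F)) : RTree F

namespace RTree

mutual
  /-- The semantics `⟦τ⟧` of a 1STS whose constants are `δ(f) = (τ f 0, …, τ f (ar f))`:
  `⟦τ⟧(f(t₁,…,t_k)) = u₀·⟦τ⟧(t₁)·u₁⋯⟦τ⟧(t_k)·u_k`. -/
  def sem {F Γ : Type} (τ : F → ℕ → List Γ) : RTree F → List Γ
    | .node f ts => τ f 0 ++ semList τ f 1 ts
  def semList {F Γ : Type} (τ : F → ℕ → List Γ) (f : F) : ℕ → List (RTree F) → List Γ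
    | _, [] => []
    | i, t :: ts => sem τ t ++ τ f i ++ semList τ f (i + 1) ts
end

end RTree

/-- A tree test set for a set of trees `D`: a subset `T ⊆ D` such that any two 1STSs
(over any output alphabet) agreeing on every tree of `T` agree on every tree of `D`. -/
def IsTreeTestSet {F : Type} (T D : Set (RTree F)) : Prop :=
  T ⊆ D ∧ ∀ (Γ : Type) (τ₁ τ₂ : F → ℕ → List Γ),
    (∀ t ∈ T, RTree.sem τ₁ t = RTree.sem τ₂ t) → ∀ t ∈ D, RTree.sem τ₁ t = RTree.sem τ₂ t

/-- The ranked alphabet `Σₙ = { Aⱼ (arity 1), Bⱼ (arity 1), Fⱼ (arity 0) : j ∈ [1,n] }`. -/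
inductive ABF (n : ℕ) : Type
  | A (j : Fin n) : ABF n
  | B (j : Fin n) : ABF n
  | F (j : Fin n) : ABF n

/-- The tree `F_z`. -/
def tF {n : ℕ} (z : Fin n) : RTree (ABF n) := .node (.F z) []

/-- The tree `B_y(F_z)`. -/
def tB {n : ℕ} (y z : Fin n) : RTree (ABF n) := .node (.B y) [tF z]

/-- The tree `A_x(B_y(F_z))`. -/
def tA {n : ℕ} (x y z : Fin n) : RTree (ABF n) := .node (.A x) [tB y z]

/-- The domain `Dₙ = { F_z } ∪ { B_y(F_z) } ∪ { A_x(B_y(F_z)) }`. -/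
def Dn (n : ℕ) : Set (RTree (ABF n)) :=
  { t | (∃ z, t = tF z) ∨ (∃ y z, t = tB y z) ∨ (∃ x y z, t = tA x y z) }

/-- First 1STS of the separating pair: `δ(A_x) = (ε, pq)`, `δ(B_y) = (p, q)`,
`δ(F_z) = pq`, all other entries `ε`. Here `p = true`, `q = false`. -/
def sep₁ {n : ℕ} (x y z : Fin n) : ABF n → ℕ → List Bool
  | .A x', i => if x' = x ∧ i = 1 then [true, false] else []
  | .B y', i => if y' = y ∧ i = 0 then [true] else if y' = y ∧ i = 1 then [false] else []
  | .F z', i => if z' = z ∧ i = 0 then [true, false] else []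

/-- Second 1STS of the separating pair: same as `sep₁` except `δ(A_x) = (pq, ε)`. -/
def sep₂ {n : ℕ} (x y z : Fin n) : ABF n → ℕ → List Bool
  | .A x', i => if x' = x ∧ i = 0 then [true, false] else []
  | .B y', i => if y' = y ∧ i = 0 then [true] else if y' = y ∧ i = 1 then [false] else []
  | .F z', i => if z' = z ∧ i = 0 then [true, false] else []

lemma tA_inj {n : ℕ} {x y z x' y' z' : Fin n} (h : tA x y z = tA x' y' z') :
    x = x' ∧ y = y' ∧ z = z' := by
  simpa [tA, tB, tF] using h

lemma sep_spec {n : ℕ} (x y z : Fin n) :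
    (∀ t ∈ Dn n, t ≠ tA x y z → RTree.sem (sep₁ x y z) t = RTree.sem (sep₂ x y z) t) ∧
    RTree.sem (sep₁ x y z) (tA x y z) ≠ RTree.sem (sep₂ x y z) (tA x y z) := by
  constructor
  · rintro t (⟨z', rfl⟩ | ⟨y', z', rfl⟩ | ⟨x', y', z', rfl⟩) hne
    · simp [tF, RTree.sem, RTree.semList, sep₁, sep₂]
    · simp [tB, tF, RTree.sem, RTree.semList, sep₁, sep₂]
    · have hx : ¬(x' = x ∧ y' = y ∧ z' = z) := by
        rintro ⟨rfl, rfl, rfl⟩; exact hne rfl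
      by_cases h1 : x' = x <;> by_cases h2 : y' = y <;> by_cases h3 : z' = z <;>
        simp [tA, tB, tF, RTree.sem, RTree.semList, sep₁, sep₂, h1, h2, h3] <;>
        tauto
  · simp [tA, tB, tF, RTree.sem, RTree.semList, sep₁, sep₂]

/-- Every tree test set of `Dₙ` has at least `n³` elements; indeed, for every
`x, y, z` there are two 1STSs with output alphabet `{p, q}` (here `Bool`) agreeing on
every tree of `Dₙ` except `A_x(B_y(F_z))`, where they differ. -/
theorem treeTestSet_lowerBound (n : ℕ) (hn : 1 ≤ n) :
    (∀ T : Set (RTree (ABF n)), IsTreeTestSet T (Dn n) → n ^ 3 ≤ T.ncard) ∧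
    ∀ x y z : Fin n, ∃ τ₁ τ₂ : ABF n → ℕ → List Bool,
      (∀ t ∈ Dn n, t ≠ tA x y z → RTree.sem τ₁ t = RTree.sem τ₂ t) ∧
      RTree.sem τ₁ (tA x y z) ≠ RTree.sem τ₂ (tA x y z) := by
  constructor
  · intro T hT
    -- every `tA x y z` must belong to `T`
    have key : ∀ x y z : Fin n, tA x y z ∈ T := by
      intro x y z
      by_contra hmem
      obtain ⟨hag, hne⟩ := sep_spec x y z
      refine hne (hT.2 Bool _ _ (fun t ht => hag t (hT.1 ht) ?_) _ ?_)
      · rintro rfl; exact hmem ht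
      · exact Or.inr (Or.inr ⟨x, y, z, rfl⟩)
    -- so `T` contains the range of the injective map `(x,y,z) ↦ tA x y z`
    set φ : Fin n × Fin n × Fin n → RTree (ABF n) := fun p => tA p.1 p.2.1 p.2.2 with hφ
    have hinj : Function.Injective φ := by
      rintro ⟨a, b, c⟩ ⟨a', b', c'⟩ h
      obtain ⟨h1, h2, h3⟩ := tA_inj h
      simp_all
    have hsub : Set.range φ ⊆ T := by
      rintro t ⟨⟨a, b, c⟩, rfl⟩; exact key a b c
    have hDfin : (Dn n).Finite := by
      have : Dn n ⊆ Set.range (fun z : Fin n => tF z) ∪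
          Set.range (fun p : Fin n × Fin n => tB p.1 p.2) ∪ Set.range φ := by
        rintro t (⟨z, rfl⟩ | ⟨y, z, rfl⟩ | ⟨x, y, z, rfl⟩)
        · exact Or.inl (Or.inl ⟨z, rfl⟩)
        · exact Or.inl (Or.inr ⟨(y, z), rfl⟩)
        · exact Or.inr ⟨(x, y, z), rfl⟩
      exact Set.Finite.subset (((Set.finite_range _).union (Set.finite_range _)).union
        (Set.finite_range _)) this
    have hTfin : T.Finite := hDfin.subset hT.1
    calc n ^ 3 = (Set.range φ).ncard := by
          rw [← Set.image_univ, Set.ncard_image_of_injective _ hinj, Set.ncard_univ]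
          simp [Nat.card_eq_fintype_card]
          ring
      _ ≤ T.ncard := Set.ncard_le_ncard hsub hTfin
  · intro x y z
    exact ⟨sep₁ x y z, sep₂ x y z, sep_spec x y z⟩
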